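/- A firing sequence of the synchronous product sp = N_l × N_m from its initial marking to its final marking projects to a firing sequence of N_l from i_l to f_l (on first components, dropping ≫) and to a firing sequence of N_m from i_m to f_m (on second components, dropping ≫). -/
import Mathlib


/-- Firing semantics of a marked Petri net with markings as sets of places. -/
inductive Fires {P T : Type*} (pre post : T → Set P) :
    Set P → List T → Set P → Prop
  | nil (m : Set P) : Fires pre post m [] m
  | cons {m m' : Set P} {t : T} {σ : List T} :
      pre t ⊆ m → Fires pre post ((m \ pre t) ∪ post t) σ m' →
      Fires pre post m (t :: σ) m'

/-- A transition of the synchronous product: a log move, a model move, or a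
synchronous move with matching labels (≫ = `none`). -/
def IsSPTransition {Tl Tm A : Type*} (labl : Tl → A) (labm : Tm → A)
    (x : Option Tl × Option Tm) : Prop :=
  (∃ a, x = (some a, none)) ∨ (∃ b, x = (none, some b)) ∨
  (∃ a b, x = (some a, some b) ∧ labl a = labm b)

/-- The preset of a synchronous-product transition. -/
def preSP {Pl Pm Tl Tm : Type*} (prel : Tl → Set Pl) (prem : Tm → Set Pm)
    (x : Option Tl × Option Tm) : Set (Pl ⊕ Pm) :=
  (match x.1 with | some a => Sum.inl '' prel a | none => ∅) ∪
  (match x.2 with | some b => Sum.inr '' prem b | none => ∅)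

/-- The postset of a synchronous-product transition. -/
def postSP {Pl Pm Tl Tm : Type*} (postl : Tl → Set Pl) (postm : Tm → Set Pm)
    (x : Option Tl × Option Tm) : Set (Pl ⊕ Pm) :=
  (match x.1 with | some a => Sum.inl '' postl a | none => ∅) ∪
  (match x.2 with | some b => Sum.inr '' postm b | none => ∅)


section
variable {Pl Pm : Type*}

lemma union_eq_union_iff {s s' : Set Pl} {t t' : Set Pm}
    (h : (Sum.inl '' s ∪ Sum.inr '' t : Set (Pl ⊕ Pm)) = Sum.inl '' s' ∪ Sum.inr '' t') :
    s = s' ∧ t = t' := by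
  constructor
  · ext x
    have := Set.ext_iff.mp h (Sum.inl x)
    simpa using this
  · ext x
    have := Set.ext_iff.mp h (Sum.inr x)
    simpa using this

lemma inl_subset {s : Set Pl} {il : Set Pl} {im : Set Pm}
    (h : (Sum.inl '' s : Set (Pl ⊕ Pm)) ⊆ Sum.inl '' il ∪ Sum.inr '' im) : s ⊆ il := by
  intro x hx
  have := h ⟨x, hx, rfl⟩
  simpa using this

lemma inr_subset {t : Set Pm} {il : Set Pl} {im : Set Pm}
    (h : (Sum.inr '' t : Set (Pl ⊕ Pm)) ⊆ Sum.inl '' il ∪ Sum.inr '' im) : t ⊆ im := by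
  intro x hx
  have := h ⟨x, hx, rfl⟩
  simpa using this

lemma step_eq (il pa qa : Set Pl) (im pb qb : Set Pm) :
    (((Sum.inl '' il ∪ Sum.inr '' im) \ (Sum.inl '' pa ∪ Sum.inr '' pb)) ∪
      (Sum.inl '' qa ∪ Sum.inr '' qb) : Set (Pl ⊕ Pm)) =
    Sum.inl '' ((il \ pa) ∪ qa) ∪ Sum.inr '' ((im \ pb) ∪ qb) := by
  ext x
  cases x <;> simp [Set.mem_diff]
end

lemma fires_nil_eq {P T : Type*} {pre post : T → Set P} {m m' : Set P}
    (h : Fires pre post m [] m') : m = m' := by cases h; rfl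

/-- A firing sequence of the synchronous product sp = N_l × N_m from its
initial marking i_l ∪ i_m to its final marking f_l ∪ f_m projects to a firing
sequence of N_l from i_l to f_l (first components, dropping ≫) and to a firing
sequence of N_m from i_m to f_m (second components, dropping ≫). -/
theorem sync_product_firing_projects {Pl Pm Tl Tm A : Type*}
    (labl : Tl → A) (labm : Tm → A)
    (prel postl : Tl → Set Pl) (prem postm : Tm → Set Pm)
    (il fl : Set Pl) (im fm : Set Pm)
    (σ : List (Option Tl × Option Tm))
    (hσ : ∀ x ∈ σ, IsSPTransition labl labm x)
    (hfire : Fires (preSP prel prem) (postSP postl postm)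
      (Sum.inl '' il ∪ Sum.inr '' im) σ (Sum.inl '' fl ∪ Sum.inr '' fm)) :
    Fires prel postl il (σ.filterMap Prod.fst) fl ∧
    Fires prem postm im (σ.filterMap Prod.snd) fm := by
  induction σ generalizing il im with
  | nil =>
    obtain ⟨h1, h2⟩ := union_eq_union_iff (fires_nil_eq hfire)
    subst h1; subst h2
    exact ⟨Fires.nil _, Fires.nil _⟩
  | cons x σ ih =>
    cases hfire with
    | cons hpre hrest =>
      rcases hσ x (by simp) with ⟨a, hx⟩ | ⟨b, hx⟩ | ⟨a, b, hx, _⟩ <;> subst hx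
      · have hpre' : prel a ⊆ il := by
          intro y hy
          have := hpre (show Sum.inl y ∈ preSP prel prem (some a, none) by
            simp [preSP, hy])
          simpa using this
        have heq : ((Sum.inl '' il ∪ Sum.inr '' im) \ preSP prel prem (some a, none))
            ∪ postSP postl postm (some a, none)
            = Sum.inl '' ((il \ prel a) ∪ postl a) ∪ Sum.inr '' ((im \ ∅) ∪ ∅) := by
          simpa [preSP, postSP] using step_eq il (prel a) (postl a) im ∅ ∅
        rw [heq] at hrest
        obtain ⟨h1, h2⟩ := ih _ _ (fun y hy => hσ y (by simp [hy])) hrest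
        simp only [Set.diff_empty, Set.union_empty] at h2
        exact ⟨Fires.cons hpre' h1, by simpa using h2⟩
      · have hpre' : prem b ⊆ im := by
          intro y hy
          have := hpre (show Sum.inr y ∈ preSP prel prem (none, some b) by
            simp [preSP, hy])
          simpa using this
        have heq : ((Sum.inl '' il ∪ Sum.inr '' im) \ preSP prel prem (none, some b))
            ∪ postSP postl postm (none, some b)
            = Sum.inl '' ((il \ ∅) ∪ ∅) ∪ Sum.inr '' ((im \ prem b) ∪ postm b) := by
          simpa [preSP, postSP] using step_eq il ∅ ∅ im (prem b) (postm b)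
        rw [heq] at hrest
        obtain ⟨h1, h2⟩ := ih _ _ (fun y hy => hσ y (by simp [hy])) hrest
        simp only [Set.diff_empty, Set.union_empty] at h1
        exact ⟨by simpa using h1, Fires.cons hpre' h2⟩
      · have hsub : Sum.inl '' prel a ∪ Sum.inr '' prem b ⊆ Sum.inl '' il ∪ Sum.inr '' im := hpre
        have hpa : prel a ⊆ il := inl_subset (Set.union_subset_iff.mp hsub).1
        have hpb : prem b ⊆ im := inr_subset (Set.union_subset_iff.mp hsub).2
        have heq : ((Sum.inl '' il ∪ Sum.inr '' im) \ preSP prel prem (some a, some b))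
            ∪ postSP postl postm (some a, some b)
            = Sum.inl '' ((il \ prel a) ∪ postl a) ∪ Sum.inr '' ((im \ prem b) ∪ postm b) := by
          simpa [preSP, postSP] using step_eq il (prel a) (postl a) im (prem b) (postm b)
        rw [heq] at hrest
        obtain ⟨h1, h2⟩ := ih _ _ (fun y hy => hσ y (by simp [hy])) hrest
        exact ⟨Fires.cons hpa h1, Fires.cons hpb h2⟩
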